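/- Let A and B be n×n matrices over the tropical semiring such that both tropical products A^{n!}B^{n!} and B^{n!}A^{n!} are sign-nonsingular. Then for every index i one has [A^{n!}B^{n!}]_{ii} = [A^{n!}]_{ii} + [B^{n!}]_{ii}. -/
import Mathlib


/-- Tropical (min-plus) matrix product. -/
noncomputable def tropMul {l m o : Type*} [Fintype m] [Nonempty m]
    (A : Matrix l m ℝ) (B : Matrix m o ℝ) : Matrix l o ℝ :=
  fun i j => Finset.univ.inf' Finset.univ_nonempty fun t => A i t + B t j

/-- Evaluation of a word over `{x, y}` (here `true` stands for `x`, `false` for `y`)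
as a tropical matrix product; the empty word evaluates to the junk value `A`. -/
noncomputable def evalWord {n : ℕ} [NeZero n] (A B : Matrix (Fin n) (Fin n) ℝ) :
    List Bool → Matrix (Fin n) (Fin n) ℝ
  | [] => A
  | b :: t => t.foldl (fun M c => tropMul M (cond c A B)) (cond b A B)

/-- Tropical matrix power (`tropPow A k` is `A^k` for `k ≥ 1`; `A^0` is junk `= A`). -/
noncomputable def tropPow {n : ℕ} [NeZero n] (A : Matrix (Fin n) (Fin n) ℝ) (k : ℕ) :
    Matrix (Fin n) (Fin n) ℝ :=
  evalWord A A (List.replicate k true)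

/-- Tropical permanent. -/
noncomputable def tropPerm {n : ℕ} (A : Matrix (Fin n) (Fin n) ℝ) : ℝ :=
  Finset.univ.inf' Finset.univ_nonempty fun σ : Equiv.Perm (Fin n) => ∑ i, A i (σ i)

/-- `Σ(A)`: the set of permutations attaining the tropical permanent. -/
def minPerms {n : ℕ} (A : Matrix (Fin n) (Fin n) ℝ) : Set (Equiv.Perm (Fin n)) :=
  { σ | ∑ i, A i (σ i) = tropPerm A }

/-- A matrix is sign-nonsingular if all permutations in `Σ(A)` have the same parity. -/
def SignNonsingular {n : ℕ} (A : Matrix (Fin n) (Fin n) ℝ) : Prop :=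
  ∀ σ ∈ minPerms A, ∀ τ ∈ minPerms A, Equiv.Perm.sign σ = Equiv.Perm.sign τ

/-- A matrix is sign-singular if `Σ(A)` contains two permutations of different parity. -/
def SignSingular {n : ℕ} (A : Matrix (Fin n) (Fin n) ℝ) : Prop :=
  ∃ σ ∈ minPerms A, ∃ τ ∈ minPerms A, Equiv.Perm.sign σ ≠ Equiv.Perm.sign τ

/-- Similarity transformation determined by `s`. -/
def simTrans {n : ℕ} (s : Fin n → ℝ) (C : Matrix (Fin n) (Fin n) ℝ) :
    Matrix (Fin n) (Fin n) ℝ :=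
  fun i j => C i j + s i - s j

/-- Diagonally `H`-dominant matrix. -/
def DiagDominant {n : ℕ} (H : ℝ) (A : Matrix (Fin n) (Fin n) ℝ) : Prop :=
  ∀ i j, A i j ≥ max (A i i) (A j j) + H * |A i i - A j j|

/-- Diagonally `H`-dominant pair of matrices. -/
def DiagDomPair {n : ℕ} (H : ℝ) (A B : Matrix (Fin n) (Fin n) ℝ) : Prop :=
  (∀ i, A i i = B i i) ∧ DiagDominant H (fun i j => min (A i j) (B i j))

section perm
variable {n : ℕ} (P : Matrix (Fin n) (Fin n) ℝ)

lemma tropPerm_le (σ : Equiv.Perm (Fin n)) : tropPerm P ≤ ∑ i, P i (σ i) :=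
  Finset.inf'_le _ (Finset.mem_univ σ)

lemma tropPerm_exists : ∃ σ, σ ∈ minPerms P := by
  obtain ⟨σ, _, h⟩ := Finset.exists_mem_eq_inf' (Finset.univ_nonempty)
    (fun σ : Equiv.Perm (Fin n) => ∑ i, P i (σ i))
  exact ⟨σ, h.symm⟩

lemma sign_mul_swap_ne (σ : Equiv.Perm (Fin n)) {p q : Fin n} (hpq : p ≠ q) :
    Equiv.Perm.sign (σ * Equiv.swap p q) ≠ Equiv.Perm.sign σ := by
  rw [Equiv.Perm.sign_mul, Equiv.Perm.sign_swap hpq]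
  intro h
  have h2 : σ.sign * (-1) = σ.sign * 1 := by simpa using h
  have := mul_left_cancel h2
  exact absurd this (by decide)

lemma sum_swap_split (F : Fin n → ℝ) {p q : Fin n} (hpq : p ≠ q) :
    ∑ i, F i = ∑ i ∈ ({p, q} : Finset (Fin n))ᶜ, F i + (F p + F q) := by
  rw [← Finset.sum_pair hpq, Finset.sum_compl_add_sum]

lemma swap_mem {σ : Equiv.Perm (Fin n)} (hσ : σ ∈ minPerms P) {p q : Fin n} (hpq : p ≠ q)
    (hle : P p (σ q) + P q (σ p) ≤ P p (σ p) + P q (σ q)) :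
    σ * Equiv.swap p q ∈ minPerms P := by
  have hup : tropPerm P ≤ ∑ i, P i ((σ * Equiv.swap p q) i) := tropPerm_le _ _
  have hdown : ∑ i, P i ((σ * Equiv.swap p q) i) ≤ ∑ i, P i (σ i) := by
    rw [sum_swap_split (fun i => P i ((σ * Equiv.swap p q) i)) hpq,
        sum_swap_split (fun i => P i (σ i)) hpq]
    have hcongr : ∑ i ∈ ({p, q} : Finset (Fin n))ᶜ, P i ((σ * Equiv.swap p q) i)
        = ∑ i ∈ ({p, q} : Finset (Fin n))ᶜ, P i (σ i) := by
      apply Finset.sum_congr rfl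
      intro i hi
      simp only [Finset.mem_compl, Finset.mem_insert, Finset.mem_singleton, not_or] at hi
      rw [Equiv.Perm.mul_apply, Equiv.swap_apply_of_ne_of_ne hi.1 hi.2]
    have h1 : (σ * Equiv.swap p q) p = σ q := by
      rw [Equiv.Perm.mul_apply, Equiv.swap_apply_left]
    have h2 : (σ * Equiv.swap p q) q = σ p := by
      rw [Equiv.Perm.mul_apply, Equiv.swap_apply_right]
    rw [hcongr, h1, h2]
    linarith
  have hmem := hσ
  unfold minPerms at hmem ⊢
  simp only [Set.mem_setOf_eq] at hmem ⊢
  rw [hmem] at hdown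
  linarith

lemma not_sns_of_swap {σ : Equiv.Perm (Fin n)} (hσ : σ ∈ minPerms P) {p q : Fin n} (hpq : p ≠ q)
    (hle : P p (σ q) + P q (σ p) ≤ P p (σ p) + P q (σ q)) :
    ¬ SignNonsingular P := by
  intro h
  exact sign_mul_swap_ne σ hpq (h _ (swap_mem P hσ hpq hle) _ hσ)

end perm

section basics
variable {n : ℕ} [NeZero n] (A : Matrix (Fin n) (Fin n) ℝ)

noncomputable def TPow (m : ℕ) : Matrix (Fin n) (Fin n) ℝ :=
  (fun M => tropMul M A)^[m] A

lemma TPow_succ (m : ℕ) : TPow A (m+1) = tropMul (TPow A m) A :=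
  Function.iterate_succ_apply' _ _ _

lemma tropMul_le (M N : Matrix (Fin n) (Fin n) ℝ) (i j t : Fin n) :
    tropMul M N i j ≤ M i t + N t j :=
  Finset.inf'_le _ (Finset.mem_univ t)

lemma tropMul_exists (M N : Matrix (Fin n) (Fin n) ℝ) (i j : Fin n) :
    ∃ t, tropMul M N i j = M i t + N t j := by
  obtain ⟨t, _, h⟩ := Finset.exists_mem_eq_inf' (Finset.univ_nonempty) (fun t => M i t + N t j)
  exact ⟨t, h⟩

noncomputable def wcost (m : ℕ) (w : ℕ → Fin n) : ℝ :=
  ∑ a ∈ Finset.range (m+1), A (w a) (w (a+1))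

lemma le_wcost (m : ℕ) (w : ℕ → Fin n) :
    TPow A m (w 0) (w (m+1)) ≤ wcost A m w := by
  induction m with
  | zero => simp [wcost, TPow]
  | succ m ih =>
      rw [TPow_succ]
      calc tropMul (TPow A m) A (w 0) (w (m+2))
          ≤ TPow A m (w 0) (w (m+1)) + A (w (m+1)) (w (m+2)) := tropMul_le _ _ _ _ _
        _ ≤ wcost A m w + A (w (m+1)) (w (m+2)) := by linarith
        _ = wcost A (m+1) w := by
              simp only [wcost, Finset.sum_range_succ]

lemma exists_walk (m : ℕ) (u v : Fin n) :
    ∃ w : ℕ → Fin n, w 0 = u ∧ w (m+1) = v ∧ TPow A m u v = wcost A m w := by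
  induction m generalizing v with
  | zero =>
      refine ⟨fun a => if a = 0 then u else v, by simp, by simp, ?_⟩
      simp [wcost, TPow]
  | succ m ih =>
      obtain ⟨t, ht⟩ := tropMul_exists (TPow A m) A u v
      obtain ⟨w', h0, h1, hc⟩ := ih t
      refine ⟨fun a => if a ≤ m+1 then w' a else v, by simpa using h0, by
        simp [Nat.succ_le_iff], ?_⟩
      rw [TPow_succ, ht, wcost, Finset.sum_range_succ]
      have he : ∀ a ∈ Finset.range (m+1),
          A ((fun a => if a ≤ m+1 then w' a else v) a)
            ((fun a => if a ≤ m+1 then w' a else v) (a+1)) = A (w' a) (w' (a+1)) := by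
        intro a ha
        rw [Finset.mem_range] at ha
        have h2 : a ≤ m + 1 := by omega
        have h3 : a + 1 ≤ m + 1 := by omega
        simp [h2, h3]
      rw [Finset.sum_congr rfl he]
      have hlast : A ((fun a => if a ≤ m+1 then w' a else v) (m+1))
          ((fun a => if a ≤ m+1 then w' a else v) (m+2)) = A t v := by
        simp [h1]
      rw [hlast, hc]
      rfl

def cross (w1 w2 : ℕ → Fin n) (a : ℕ) : ℕ → Fin n := fun b => if b ≤ a then w1 b else w2 b

omit [NeZero n] in
lemma wcost_cross (m : ℕ) (w1 w2 : ℕ → Fin n) (a : ℕ) (hmeet : w1 a = w2 a) :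
    wcost A m (cross w1 w2 a) + wcost A m (cross w2 w1 a) = wcost A m w1 + wcost A m w2 := by
  have key : ∀ (v1 v2 : ℕ → Fin n), v1 a = v2 a → ∀ b,
      A (cross v1 v2 a b) (cross v1 v2 a (b+1)) =
        if b < a then A (v1 b) (v1 (b+1)) else A (v2 b) (v2 (b+1)) := by
    intro v1 v2 hv b
    rcases lt_trichotomy b a with h | h | h
    · have hba : b ≤ a := le_of_lt h
      by_cases h2 : b + 1 ≤ a
      · simp [cross, hba, h2, h]
      · omega
    · subst h
      simp [cross, hv]
    · have h1 : ¬ b ≤ a := not_le.mpr h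
      have h2 : ¬ b + 1 ≤ a := by omega
      simp [cross, h1, h2, not_lt.mpr (le_of_lt h)]
  unfold wcost
  rw [← Finset.sum_add_distrib, ← Finset.sum_add_distrib]
  apply Finset.sum_congr rfl
  intro b _
  rw [key w1 w2 hmeet b, key w2 w1 hmeet.symm b]
  by_cases h : b < a
  · simp [h]
  · simp [h]; ring

/-- diagonal of the power is at most (m+1) times the permanent of A,
    provided every permutation has order dividing m+1. -/
lemma diag_le_mul_perm (m : ℕ) (hfac : ∀ δ : Equiv.Perm (Fin n), δ ^ (m+1) = 1) :
    ∑ p, TPow A m p p ≤ ((m+1 : ℕ) : ℝ) * tropPerm A := by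
  obtain ⟨δ, hδ⟩ := tropPerm_exists A
  have hδval : ∑ u, A u (δ u) = tropPerm A := hδ
  have hbound : ∀ p, TPow A m p p ≤ ∑ a ∈ Finset.range (m+1), A ((δ ^ a) p) ((δ ^ (a+1)) p) := by
    intro p
    have := le_wcost A m (fun a => (δ ^ a) p)
    simpa [wcost, hfac δ] using this
  calc ∑ p, TPow A m p p
      ≤ ∑ p, ∑ a ∈ Finset.range (m+1), A ((δ ^ a) p) ((δ ^ (a+1)) p) :=
        Finset.sum_le_sum fun p _ => hbound p
    _ = ∑ a ∈ Finset.range (m+1), ∑ p, A ((δ ^ a) p) ((δ ^ (a+1)) p) := Finset.sum_comm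
    _ = ∑ a ∈ Finset.range (m+1), tropPerm A := by
        apply Finset.sum_congr rfl
        intro a _
        have hstep : ∀ p : Fin n, (δ ^ (a+1)) p = δ ((δ ^ a) p) := by
          intro p
          rw [pow_succ']
          rfl
        calc ∑ p, A ((δ ^ a) p) ((δ ^ (a+1)) p)
            = ∑ p, A ((δ ^ a) p) (δ ((δ ^ a) p)) := by
              apply Finset.sum_congr rfl; intro p _; rw [hstep]
          _ = ∑ u, A u (δ u) := Equiv.sum_comp (δ ^ a) (fun u => A u (δ u))
          _ = tropPerm A := hδval
    _ = ((m+1 : ℕ) : ℝ) * tropPerm A := by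
        rw [Finset.sum_const, Finset.card_range, nsmul_eq_mul]

end basics

section lower
variable {n : ℕ} [NeZero n] (A : Matrix (Fin n) (Fin n) ℝ)

lemma perm_lower (m : ℕ) (h : SignNonsingular (TPow A m)) :
    ((m+1 : ℕ) : ℝ) * tropPerm A ≤ tropPerm (TPow A m) := by
  obtain ⟨σ, hσ⟩ := tropPerm_exists (TPow A m)
  have hσval : ∑ i, TPow A m i (σ i) = tropPerm (TPow A m) := hσ
  choose w hw0 hw1 hwc using fun p => exists_walk A m p (σ p)
  by_cases hcol : ∃ a, a ≤ m + 1 ∧ ∃ p q, p ≠ q ∧ w p a = w q a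
  · exfalso
    obtain ⟨a, ha, p, q, hpq, hmeet⟩ := hcol
    have ha0 : a ≠ 0 := by
      intro h0
      rw [h0, hw0 p, hw0 q] at hmeet
      exact hpq hmeet
    have ham : a ≠ m + 1 := by
      intro h0
      rw [h0, hw1 p, hw1 q] at hmeet
      exact hpq (σ.injective hmeet)
    have halt : a < m + 1 := lt_of_le_of_ne ha ham
    have h1 : TPow A m p (σ q) ≤ wcost A m (cross (w p) (w q) a) := by
      have e0 : cross (w p) (w q) a 0 = p := by
        simp [cross, Nat.zero_le a, hw0 p]
      have e1 : cross (w p) (w q) a (m+1) = σ q := by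
        simp [cross, not_le.mpr halt, hw1 q]
      have := le_wcost A m (cross (w p) (w q) a)
      rwa [e0, e1] at this
    have h2 : TPow A m q (σ p) ≤ wcost A m (cross (w q) (w p) a) := by
      have e0 : cross (w q) (w p) a 0 = q := by
        simp [cross, Nat.zero_le a, hw0 q]
      have e1 : cross (w q) (w p) a (m+1) = σ p := by
        simp [cross, not_le.mpr halt, hw1 p]
      have := le_wcost A m (cross (w q) (w p) a)
      rwa [e0, e1] at this
    have hcostsum := wcost_cross A m (w p) (w q) a hmeet
    have hle : TPow A m p (σ q) + TPow A m q (σ p)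
        ≤ TPow A m p (σ p) + TPow A m q (σ q) := by
      rw [hwc p, hwc q]
      linarith
    exact not_sns_of_swap (TPow A m) hσ hpq hle h
  · push_neg at hcol
    have hinj : ∀ a, a ≤ m + 1 → Function.Injective (fun p => w p a) := by
      intro a ha p q hwpq
      by_contra hne
      exact hcol a ha p q hne hwpq
    have hbij : ∀ a, a ≤ m + 1 → Function.Bijective (fun p => w p a) := fun a ha =>
      Finite.injective_iff_bijective.mp (hinj a ha)
    have key : ∀ a ∈ Finset.range (m+1), tropPerm A ≤ ∑ p, A (w p a) (w p (a+1)) := by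
      intro a ha
      rw [Finset.mem_range] at ha
      set π : Fin n ≃ Fin n := Equiv.ofBijective _ (hbij a (by omega)) with hπ
      set ρ : Fin n ≃ Fin n := Equiv.ofBijective _ (hbij (a+1) (by omega)) with hρ
      have hsum : ∑ p, A (w p a) (w p (a+1)) = ∑ u, A u ((π.symm.trans ρ) u) := by
        rw [← Equiv.sum_comp π.symm (fun p => A (w p a) (w p (a+1)))]
        apply Finset.sum_congr rfl
        intro u _
        have h1 : w (π.symm u) a = u := π.apply_symm_apply u
        have h2 : w (π.symm u) (a+1) = (π.symm.trans ρ) u := rfl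
        rw [h1, h2]
      rw [hsum]
      exact tropPerm_le A (π.symm.trans ρ)
    calc ((m+1 : ℕ) : ℝ) * tropPerm A
        = ∑ _a ∈ Finset.range (m+1), tropPerm A := by
          rw [Finset.sum_const, Finset.card_range, nsmul_eq_mul]
      _ ≤ ∑ a ∈ Finset.range (m+1), ∑ p, A (w p a) (w p (a+1)) :=
          Finset.sum_le_sum key
      _ = ∑ p, ∑ a ∈ Finset.range (m+1), A (w p a) (w p (a+1)) := Finset.sum_comm
      _ = ∑ p, TPow A m p (σ p) := by
          apply Finset.sum_congr rfl
          intro p _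
          rw [hwc p]
          rfl
      _ = tropPerm (TPow A m) := hσval

lemma perm_eq_diag (m : ℕ) (hfac : ∀ δ : Equiv.Perm (Fin n), δ ^ (m+1) = 1)
    (h : SignNonsingular (TPow A m)) :
    tropPerm (TPow A m) = ∑ p, TPow A m p p := by
  have h1 : tropPerm (TPow A m) ≤ ∑ p, TPow A m p p := by
    have := tropPerm_le (TPow A m) 1
    simpa using this
  have h2 := diag_le_mul_perm A m hfac
  have h3 := perm_lower A m h
  linarith

end lower

section product
variable {n : ℕ} [NeZero n] (P Q : Matrix (Fin n) (Fin n) ℝ)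

lemma comp_mem_minPerms (hM : tropPerm (tropMul P Q) = tropPerm P + tropPerm Q)
    {f g : Equiv.Perm (Fin n)} (hf : f ∈ minPerms P) (hg : g ∈ minPerms Q) :
    g * f ∈ minPerms (tropMul P Q) := by
  have hfv : ∑ i, P i (f i) = tropPerm P := hf
  have hgv : ∑ u, Q u (g u) = tropPerm Q := hg
  have hle : ∑ i, tropMul P Q i ((g * f) i) ≤ tropPerm P + tropPerm Q := by
    calc ∑ i, tropMul P Q i ((g * f) i)
        ≤ ∑ i, (P i (f i) + Q (f i) (g (f i))) :=
          Finset.sum_le_sum fun i _ => tropMul_le P Q i _ (f i)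
      _ = ∑ i, P i (f i) + ∑ i, Q (f i) (g (f i)) := Finset.sum_add_distrib
      _ = tropPerm P + tropPerm Q := by
          rw [hfv, Equiv.sum_comp f (fun u => Q u (g u)), hgv]
  have hge : tropPerm (tropMul P Q) ≤ ∑ i, tropMul P Q i ((g * f) i) := tropPerm_le _ _
  show ∑ i, tropMul P Q i ((g * f) i) = tropPerm (tropMul P Q)
  rw [hM] at hge ⊢
  linarith

lemma tropPerm_mul_le : tropPerm (tropMul P Q) ≤ tropPerm P + tropPerm Q := by
  obtain ⟨f, hf⟩ := tropPerm_exists P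
  obtain ⟨g, hg⟩ := tropPerm_exists Q
  have hfv : ∑ i, P i (f i) = tropPerm P := hf
  have hgv : ∑ u, Q u (g u) = tropPerm Q := hg
  calc tropPerm (tropMul P Q) ≤ ∑ i, tropMul P Q i ((g * f) i) := tropPerm_le _ _
    _ ≤ ∑ i, (P i (f i) + Q (f i) (g (f i))) :=
        Finset.sum_le_sum fun i _ => tropMul_le P Q i _ (f i)
    _ = ∑ i, P i (f i) + ∑ i, Q (f i) (g (f i)) := Finset.sum_add_distrib
    _ = tropPerm P + tropPerm Q := by
        rw [hfv, Equiv.sum_comp f (fun u => Q u (g u)), hgv]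

lemma tropPerm_mul_eq (h : SignNonsingular (tropMul P Q)) :
    tropPerm (tropMul P Q) = tropPerm P + tropPerm Q := by
  have hub := tropPerm_mul_le P Q
  obtain ⟨σ, hσ⟩ := tropPerm_exists (tropMul P Q)
  have hσval : ∑ i, tropMul P Q i (σ i) = tropPerm (tropMul P Q) := hσ
  choose f hfv using fun i => tropMul_exists P Q i (σ i)
  by_cases hinj : Function.Injective f
  · have hbij := Finite.injective_iff_bijective.mp hinj
    set φ : Fin n ≃ Fin n := Equiv.ofBijective f hbij with hφ
    have hsplit : tropPerm (tropMul P Q) = ∑ i, P i (φ i) + ∑ i, Q (φ i) (σ i) := by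
      rw [← hσval, ← Finset.sum_add_distrib]
      exact Finset.sum_congr rfl fun i _ => hfv i
    have h1 : tropPerm P ≤ ∑ i, P i (φ i) := tropPerm_le P φ
    have h2 : tropPerm Q ≤ ∑ i, Q (φ i) (σ i) := by
      have hsum : ∑ i, Q (φ i) (σ i) = ∑ u, Q u ((φ.symm.trans σ) u) := by
        rw [← Equiv.sum_comp φ.symm (fun i => Q (φ i) (σ i))]
        apply Finset.sum_congr rfl
        intro u _
        rw [show φ (φ.symm u) = u from φ.apply_symm_apply u]
        rfl
      rw [hsum]
      exact tropPerm_le Q (φ.symm.trans σ)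
    linarith
  · exfalso
    rw [Function.not_injective_iff] at hinj
    obtain ⟨p, q, hfeq, hpq⟩ := hinj
    have hle : tropMul P Q p (σ q) + tropMul P Q q (σ p)
        ≤ tropMul P Q p (σ p) + tropMul P Q q (σ q) := by
      have b1 : tropMul P Q p (σ q) ≤ P p (f p) + Q (f p) (σ q) := tropMul_le _ _ _ _ _
      have b2 : tropMul P Q q (σ p) ≤ P q (f q) + Q (f q) (σ p) := tropMul_le _ _ _ _ _
      rw [hfv p, hfv q, hfeq] at *
      linarith [b1, b2]
    exact not_sns_of_swap _ hσ hpq hle h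

lemma sns_factors (h : SignNonsingular (tropMul P Q)) :
    SignNonsingular P ∧ SignNonsingular Q := by
  have hM := tropPerm_mul_eq P Q h
  obtain ⟨f0, hf0⟩ := tropPerm_exists P
  obtain ⟨g0, hg0⟩ := tropPerm_exists Q
  constructor
  · intro σ₁ h1 σ₂ h2
    have m1 := comp_mem_minPerms P Q hM h1 hg0
    have m2 := comp_mem_minPerms P Q hM h2 hg0
    have := h _ m1 _ m2
    rw [Equiv.Perm.sign_mul, Equiv.Perm.sign_mul] at this
    exact mul_left_cancel this
  · intro g₁ h1 g₂ h2
    have m1 := comp_mem_minPerms P Q hM hf0 h1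
    have m2 := comp_mem_minPerms P Q hM hf0 h2
    have := h _ m1 _ m2
    rw [Equiv.Perm.sign_mul, Equiv.Perm.sign_mul] at this
    exact mul_right_cancel this

end product

section powbridge
variable {n : ℕ} [NeZero n] (A : Matrix (Fin n) (Fin n) ℝ)

lemma foldl_trop (l : List Bool) (M : Matrix (Fin n) (Fin n) ℝ) :
    l.foldl (fun M c => tropMul M (cond c A A)) M = (fun M => tropMul M A)^[l.length] M := by
  induction l generalizing M with
  | nil => rfl
  | cons c l ih =>
      rw [List.foldl_cons, ih]
      have hc : (cond c A A) = A := by cases c <;> rfl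
      rw [hc, List.length_cons, Function.iterate_succ_apply]

lemma tropPow_succ_eq (m : ℕ) : tropPow A (m+1) = TPow A m := by
  show evalWord A A (List.replicate (m+1) true) = _
  rw [List.replicate_succ]
  show (List.replicate m true).foldl _ (cond true A A) = _
  rw [foldl_trop]
  simp [TPow]

end powbridge

section ppow
variable {n : ℕ} [NeZero n]

omit [NeZero n] in
lemma perm_pow_one (δ : Equiv.Perm (Fin n)) : δ ^ (Nat.factorial n) = 1 := by
  have h1 : δ ^ (Fintype.card (Equiv.Perm (Fin n))) = 1 := pow_card_eq_one
  rwa [Fintype.card_perm, Fintype.card_fin] at h1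

end ppow

/-- If `A^{n!}B^{n!}` and `B^{n!}A^{n!}` are sign-nonsingular then
`[A^{n!}B^{n!}]_{ii} = [A^{n!}]_{ii} + [B^{n!}]_{ii}`. -/
theorem stmt5 {n : ℕ} [NeZero n] (A B : Matrix (Fin n) (Fin n) ℝ)
    (h₁ : SignNonsingular (tropMul (tropPow A (Nat.factorial n)) (tropPow B (Nat.factorial n))))
    (h₂ : SignNonsingular (tropMul (tropPow B (Nat.factorial n)) (tropPow A (Nat.factorial n))))
    (i : Fin n) :
    tropMul (tropPow A (Nat.factorial n)) (tropPow B (Nat.factorial n)) i i =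
      tropPow A (Nat.factorial n) i i + tropPow B (Nat.factorial n) i i := by
  obtain ⟨m, hm⟩ : ∃ m, Nat.factorial n = m + 1 :=
    ⟨Nat.factorial n - 1, by have := Nat.factorial_pos n; omega⟩
  have hPA : tropPow A (Nat.factorial n) = TPow A m := by rw [hm, tropPow_succ_eq]
  have hPB : tropPow B (Nat.factorial n) = TPow B m := by rw [hm, tropPow_succ_eq]
  rw [hPA, hPB] at h₁ ⊢
  set P := TPow A m
  set Q := TPow B m
  set M := tropMul P Q with hMdef
  have hfacA : ∀ δ : Equiv.Perm (Fin n), δ ^ (m + 1) = 1 := by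
    intro δ; rw [← hm]; exact perm_pow_one δ
  obtain ⟨hsnsP, hsnsQ⟩ := sns_factors P Q h₁
  have hPd : tropPerm P = ∑ p, P p p := perm_eq_diag A m hfacA hsnsP
  have hQd : tropPerm Q = ∑ p, Q p p := perm_eq_diag B m hfacA hsnsQ
  have hMperm : tropPerm M = tropPerm P + tropPerm Q := tropPerm_mul_eq P Q h₁
  have hMperm' : tropPerm M = ∑ p, (P p p + Q p p) := by
    rw [hMperm, hPd, hQd, Finset.sum_add_distrib]
  have hdle : ∀ p, M p p ≤ P p p + Q p p := fun p => tropMul_le P Q p p p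
  have hIdle : tropPerm M ≤ ∑ p, M p p := by
    have := tropPerm_le M 1
    simpa using this
  refine le_antisymm (hdle i) ?_
  by_contra hlt
  push_neg at hlt
  have hstrict : ∑ p, M p p < ∑ p, (P p p + Q p p) :=
    Finset.sum_lt_sum (fun p _ => hdle p) ⟨i, Finset.mem_univ i, hlt⟩
  rw [← hMperm'] at hstrict
  linarith
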